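/- The matrices W(1,0,1) ⊕ ᵗW(1,0,1) and W(0,1,2) ⊕ W(0,1,2) (both 6×6 integer involutions in Sp(6,ℤ)) are not conjugate over ℤ, since their fixed sublattices ker(R − I) ⊆ ℤ⁶ are non-isomorphic as sublattices with respect to the symplectic form; in particular, there is no E ∈ Sp(6,ℤ) with E⁻¹ (W(1,0,1) ⊕ ᵗW(1,0,1)) E = W(0,1,2) ⊕ W(0,1,2). -/

import Mathlib

set_option maxRecDepth 8000


open Matrix

/-- The standard symplectic form matrix `J = [[0, I₃],[-I₃, 0]]`. -/
def Jstd : Matrix (Fin 3 ⊕ Fin 3) (Fin 3 ⊕ Fin 3) ℤ :=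
  Matrix.fromBlocks 0 1 (-1) 0

/-- The involutions `R₁ = W(1,0,1) ⊕ ᵗW(1,0,1)` and `R₂ = W(0,1,2) ⊕ W(0,1,2)` are
not conjugate in `Sp(6, ℤ)`: there is no symplectic `E` with `E⁻¹ R₁ E = R₂`. -/
theorem not_symplectically_conjugate :
    ¬ ∃ E : Matrix (Fin 3 ⊕ Fin 3) (Fin 3 ⊕ Fin 3) ℤ,
      Eᵀ * Jstd * E = Jstd ∧
      E⁻¹ * (Matrix.fromBlocks (!![1, 0, 0; 1, -1, 0; 0, 0, 1] : Matrix (Fin 3) (Fin 3) ℤ) 0 0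
          (!![1, 0, 0; 1, -1, 0; 0, 0, 1])ᵀ) * E =
        Matrix.fromBlocks (!![-1, 0, 0; 0, 1, 0; 0, 0, 1] : Matrix (Fin 3) (Fin 3) ℤ) 0 0
          !![-1, 0, 0; 0, 1, 0; 0, 0, 1] := by
  rintro ⟨E, hE, hconj⟩
  set R₁ : Matrix (Fin 3 ⊕ Fin 3) (Fin 3 ⊕ Fin 3) ℤ :=
    Matrix.fromBlocks (!![1, 0, 0; 1, -1, 0; 0, 0, 1] : Matrix (Fin 3) (Fin 3) ℤ) 0 0
      (!![1, 0, 0; 1, -1, 0; 0, 0, 1])ᵀ with hR₁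
  set R₂ : Matrix (Fin 3 ⊕ Fin 3) (Fin 3 ⊕ Fin 3) ℤ :=
    Matrix.fromBlocks (!![-1, 0, 0; 0, 1, 0; 0, 0, 1] : Matrix (Fin 3) (Fin 3) ℤ) 0 0
      !![-1, 0, 0; 0, 1, 0; 0, 0, 1] with hR₂
  -- `Jstd` has unit determinant
  have hJJ : Jstd * Jstdᵀ = 1 := by
    simp [Jstd, Matrix.fromBlocks_transpose, Matrix.fromBlocks_multiply,
      ← Matrix.fromBlocks_one]
  have hJunit : IsUnit Jstd.det :=
    IsUnit.of_mul_eq_one (a := Jstd.det) Jstdᵀ.det (by rw [← Matrix.det_mul, hJJ, Matrix.det_one])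
  -- `det E ^ 2 = 1`
  have hdet : E.det * Jstd.det * E.det = Jstd.det := by
    calc E.det * Jstd.det * E.det = (Eᵀ * Jstd * E).det := by
          rw [Matrix.det_mul, Matrix.det_mul, Matrix.det_transpose]
      _ = Jstd.det := by rw [hE]
  have hdE : E.det ^ 2 = 1 := by
    have h0 : Jstd.det ≠ 0 := hJunit.ne_zero
    have : (E.det ^ 2 - 1) * Jstd.det = 0 := by ring_nf; linarith [hdet]
    rcases mul_eq_zero.mp this with h | h
    · linarith
    · exact absurd h h0
  have hEunit : IsUnit E.det :=
    IsUnit.of_mul_eq_one (a := E.det) E.det (by rw [← sq]; exact hdE)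
  -- `R₁ * E = E * R₂`
  have h2 : R₁ * E = E * R₂ := by
    rw [← hconj, ← mul_assoc, ← mul_assoc, Matrix.mul_nonsing_inv E hEunit, one_mul]
  -- reduce mod 2
  set φ : ℤ →+* ZMod 2 := Int.castRingHom (ZMod 2) with hφ
  have h3 : (R₁.map φ) * (E.map φ) = (E.map φ) * (R₂.map φ) := by
    rw [← Matrix.map_mul, ← Matrix.map_mul, h2]
  have hB : R₂.map φ = 1 := by decide
  rw [hB, mul_one] at h3
  have hzero : (R₁.map φ - 1) * (E.map φ) = 0 := by
    rw [sub_mul, one_mul, h3, sub_self]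
  have hEE : E * E⁻¹ = 1 := Matrix.mul_nonsing_inv E hEunit
  have hFG : (E.map φ) * (E⁻¹.map φ) = 1 := by
    rw [← Matrix.map_mul, hEE, Matrix.map_one φ (map_zero φ) (map_one φ)]
  have hA0 : R₁.map φ - 1 = 0 := by
    calc R₁.map φ - 1 = (R₁.map φ - 1) * ((E.map φ) * (E⁻¹.map φ)) := by
          rw [hFG, mul_one]
      _ = ((R₁.map φ - 1) * (E.map φ)) * (E⁻¹.map φ) := by rw [mul_assoc]
      _ = 0 := by rw [hzero, Matrix.zero_mul]
  have : R₁.map φ - 1 ≠ 0 := by decide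
  exact this hA0
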